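/- arXiv:1704.05257 — 3 statements merged into one kernel-verified Lean document; each statement's English description precedes it below -/
import Mathlib

section
/- Let G be the graph obtained from K_{s,t} by attaching a ≥ 1 pendent vertices to u and b ≥ 1 pendent vertices to v, where u, v are distinct vertices of the same part of K_{s,t} (s,t ≥ 2), and let G' be obtained by moving all a pendent edges from u to v. Then H(G') − H(G) = ab/4, where H is the Harary index. -/
open Finset
open scoped Classical

/-- Wiener index: sum of distances over unordered pairs of vertices. -/
noncomputable def wiener {V : Type*} [Fintype V] (G : SimpleGraph V) : ℚ :=
  (1/2) * ∑ u : V, ∑ v : V, (G.dist u v : ℚ)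

/-- Harary index: sum of reciprocal distances over unordered pairs of distinct vertices. -/
noncomputable def harary {V : Type*} [Fintype V] (G : SimpleGraph V) : ℚ :=
  (1/2) * ∑ p ∈ Finset.univ.offDiag, (1 : ℚ) / (G.dist p.1 p.2 : ℚ)

/-- Hyper-Wiener index: (1/2) Σ_{unordered pairs} (d + d²). -/
noncomputable def hyperWiener {V : Type*} [Fintype V] (G : SimpleGraph V) : ℚ :=
  (1/4) * ∑ u : V, ∑ v : V, ((G.dist u v : ℚ) + (G.dist u v : ℚ)^2)

/-- Eccentricity of a vertex: maximum distance to any other vertex. -/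
noncomputable def ecc {V : Type*} [Fintype V] (G : SimpleGraph V) (u : V) : ℕ :=
  Finset.univ.sup (fun v => G.dist u v)

/-- Connective eccentricity index: Σ_u deg(u)/ε(u). -/
noncomputable def cei {V : Type*} [Fintype V] (G : SimpleGraph V) : ℚ :=
  ∑ u : V, (G.degree u : ℚ) / (ecc G u : ℚ)

/-- Eccentricity distance sum: Σ_u ε(u)·D(u). -/
noncomputable def eds {V : Type*} [Fintype V] (G : SimpleGraph V) : ℚ :=
  ∑ u : V, (ecc G u : ℚ) * ∑ v : V, (G.dist u v : ℚ)

/-- The graph obtained from the complete bipartite graph `K_{s,t}` (first part `Fin s`,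
second part `Fin t`) by attaching `a` pendant vertices to the vertex `u` and `b` pendant
vertices to the vertex `v`, where `u v : Fin s` are in the same part. -/
def KstPend (s t a b : ℕ) (u v : Fin s) :
    SimpleGraph ((Fin s ⊕ Fin t) ⊕ (Fin a ⊕ Fin b)) :=
  SimpleGraph.fromRel (fun x y =>
    (∃ i j, x = Sum.inl (Sum.inl i) ∧ y = Sum.inl (Sum.inr j)) ∨
    (∃ p, x = Sum.inr (Sum.inl p) ∧ y = Sum.inl (Sum.inl u)) ∨
    (∃ q, x = Sum.inr (Sum.inr q) ∧ y = Sum.inl (Sum.inl v)))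

/-!
Distances in `KstPend s t a b u v` are explicit (at most 4, realised by walks through one fixed
vertex of the second part), so its Harary index has a closed form. In that closed form the
position of the pendant vertices matters only through the `a * b` pairs of pendant vertices at
`u` and at `v`, which are at distance 4 when `u ≠ v` and 2 when `u = v`; the pairs joining a
pendant vertex to the first part contribute `1 + (s - 1) / 3` whichever vertex carries it.
-/

theorem Fintype.sum_ite_eq_sub_add_card_nsmul {ι M : Type*} [Fintype ι] [DecidableEq ι]
    [AddCommGroup M] (i : ι) (c d : M) :
    ∑ j, (if j = i then c else d) = c - d + Fintype.card ι • d := by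
  have : ∀ j, (if j = i then c else d) = (if j = i then c - d else 0) + d := by
    intro j; split_ifs <;> simp
  simp [this, Finset.sum_add_distrib, Finset.card_univ]

theorem Fintype.sum_ite_eq_sub_add_card_nsmul' {ι M : Type*} [Fintype ι] [DecidableEq ι]
    [AddCommGroup M] (i : ι) (c d : M) :
    ∑ j, (if i = j then c else d) = c - d + Fintype.card ι • d := by
  simp only [eq_comm (a := i), Fintype.sum_ite_eq_sub_add_card_nsmul]

namespace SimpleGraph

variable {V : Type*} {G : SimpleGraph V}

theorem Walk.apply_le_apply_add_length {f : V → ℕ} (hf : ∀ y z, G.Adj y z → f z ≤ f y + 1)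
    {p q : V} (w : G.Walk p q) : f q ≤ f p + w.length := by
  induction w with
  | nil => simp
  | cons h _ ih => have := hf _ _ h; simp only [Walk.length_cons]; omega

theorem dist_eq_of_walk_length_eq {d : V → V → ℕ} (hself : ∀ x, d x x = 0)
    (hadj : ∀ x y z, G.Adj y z → d x z ≤ d x y + 1)
    (hwalk : ∀ x y, ∃ w : G.Walk x y, w.length = d x y) (x y : V) : G.dist x y = d x y := by
  obtain ⟨w, hw⟩ := hwalk x y
  obtain ⟨w', hw'⟩ := Reachable.exists_walk_length_eq_dist ⟨w⟩
  have := w'.apply_le_apply_add_length (hadj x)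
  rw [hself] at this
  exact le_antisymm (hw ▸ dist_le w) (by omega)

end SimpleGraph

-- The diagonal terms of the double sum are `1 / 0 = 0`.
theorem harary_eq_half_sum_sum {V : Type*} [Fintype V] (G : SimpleGraph V) :
    harary G = 1 / 2 * ∑ x, ∑ y, 1 / (G.dist x y : ℚ) := by
  rw [harary, ← Finset.sum_product']
  congr 1
  refine Finset.sum_subset (fun p _ => Finset.mem_product.2 ⟨mem_univ _, mem_univ _⟩) ?_
  intro p _ hp
  have : p.1 = p.2 := by simpa using hp
  simp [this]

namespace KstPend

variable {s t a b : ℕ} {u v : Fin s}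

def distTable (u v : Fin s) :
    (Fin s ⊕ Fin t) ⊕ (Fin a ⊕ Fin b) → (Fin s ⊕ Fin t) ⊕ (Fin a ⊕ Fin b) → ℕ
  | .inl (.inl i), .inl (.inl j) => if i = j then 0 else 2
  | .inl (.inl _), .inl (.inr _) => 1
  | .inl (.inr _), .inl (.inl _) => 1
  | .inl (.inr i), .inl (.inr j) => if i = j then 0 else 2
  | .inl (.inl i), .inr (.inl _) => if i = u then 1 else 3
  | .inr (.inl _), .inl (.inl i) => if i = u then 1 else 3
  | .inl (.inl i), .inr (.inr _) => if i = v then 1 else 3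
  | .inr (.inr _), .inl (.inl i) => if i = v then 1 else 3
  | .inl (.inr _), .inr _ => 2
  | .inr _, .inl (.inr _) => 2
  | .inr (.inl p), .inr (.inl q) => if p = q then 0 else 2
  | .inr (.inr p), .inr (.inr q) => if p = q then 0 else 2
  | .inr (.inl _), .inr (.inr _) => if u = v then 2 else 4
  | .inr (.inr _), .inr (.inl _) => if u = v then 2 else 4

theorem adj_core (i : Fin s) (j : Fin t) :
    (KstPend s t a b u v).Adj (.inl (.inl i)) (.inl (.inr j)) := by
  simp [KstPend]

theorem adj_pendant_left (p : Fin a) :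
    (KstPend s t a b u v).Adj (.inr (.inl p)) (.inl (.inl u)) := by
  simp [KstPend]

theorem adj_pendant_right (q : Fin b) :
    (KstPend s t a b u v).Adj (.inr (.inr q)) (.inl (.inl v)) := by
  simp [KstPend]

theorem distTable_self (x : (Fin s ⊕ Fin t) ⊕ (Fin a ⊕ Fin b)) : distTable u v x x = 0 := by
  rcases x with (i | j) | (p | q) <;> simp [distTable]

theorem distTable_le_succ_of_adj (x : (Fin s ⊕ Fin t) ⊕ (Fin a ⊕ Fin b))
    {y z : (Fin s ⊕ Fin t) ⊕ (Fin a ⊕ Fin b)} (h : (KstPend s t a b u v).Adj y z) :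
    distTable u v x z ≤ distTable u v x y + 1 := by
  rcases x with (i | j) | (p | q) <;> rcases y with (i' | j') | (p' | q') <;>
    rcases z with (i'' | j'') | (p'' | q'') <;>
    simp_all [KstPend, distTable] <;> split_ifs <;> omega
theorem exists_walk_length_eq_distTable_core (j₀ : Fin t) (x : Fin s ⊕ Fin t)
    (y : (Fin s ⊕ Fin t) ⊕ (Fin a ⊕ Fin b)) :
    ∃ w : (KstPend s t a b u v).Walk (.inl x) y, w.length = distTable u v (.inl x) y := by
  rcases x with i | j <;> rcases y with (i' | j') | (p' | q')
  · by_cases h : i = i'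
    · subst h; exact ⟨.nil, by simp [distTable]⟩
    · exact ⟨.cons (adj_core i j₀) (.cons (adj_core i' j₀).symm .nil), by simp [distTable, h]⟩
  · exact ⟨.cons (adj_core i j') .nil, by simp [distTable]⟩
  · by_cases h : i = u
    · subst h; exact ⟨.cons (adj_pendant_left p').symm .nil, by simp [distTable]⟩
    · exact ⟨.cons (adj_core i j₀) (.cons (adj_core u j₀).symm
        (.cons (adj_pendant_left p').symm .nil)), by simp [distTable, h]⟩
  · by_cases h : i = v
    · subst h; exact ⟨.cons (adj_pendant_right q').symm .nil, by simp [distTable]⟩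
    · exact ⟨.cons (adj_core i j₀) (.cons (adj_core v j₀).symm
        (.cons (adj_pendant_right q').symm .nil)), by simp [distTable, h]⟩
  · exact ⟨.cons (adj_core i' j).symm .nil, by simp [distTable]⟩
  · by_cases h : j = j'
    · subst h; exact ⟨.nil, by simp [distTable]⟩
    · exact ⟨.cons (adj_core u j).symm (.cons (adj_core u j') .nil), by simp [distTable, h]⟩
  · exact ⟨.cons (adj_core u j).symm (.cons (adj_pendant_left p').symm .nil),
      by simp [distTable]⟩
  · exact ⟨.cons (adj_core v j).symm (.cons (adj_pendant_right q').symm .nil),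
      by simp [distTable]⟩

theorem distTable_pendant_left (p : Fin a) {y : (Fin s ⊕ Fin t) ⊕ (Fin a ⊕ Fin b)}
    (hy : y ≠ .inr (.inl p)) :
    distTable u v (.inr (.inl p)) y = distTable u v (.inl (.inl u)) y + 1 := by
  rcases y with (i | j) | (p' | q) <;> simp [distTable] at hy ⊢ <;> grind

theorem distTable_pendant_right (q : Fin b) {y : (Fin s ⊕ Fin t) ⊕ (Fin a ⊕ Fin b)}
    (hy : y ≠ .inr (.inr q)) :
    distTable u v (.inr (.inr q)) y = distTable u v (.inl (.inl v)) y + 1 := by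
  rcases y with (i | j) | (p | q') <;> simp [distTable] at hy ⊢ <;> grind

theorem exists_walk_length_eq_distTable (j₀ : Fin t)
    (x y : (Fin s ⊕ Fin t) ⊕ (Fin a ⊕ Fin b)) :
    ∃ w : (KstPend s t a b u v).Walk x y, w.length = distTable u v x y := by
  by_cases hxy : y = x
  · subst hxy; exact ⟨.nil, (distTable_self y).symm⟩
  rcases x with x | (p | q)
  · exact exists_walk_length_eq_distTable_core j₀ x y
  · obtain ⟨w, hw⟩ := exists_walk_length_eq_distTable_core j₀ (.inl u) y
    exact ⟨.cons (adj_pendant_left p) w, by simp [hw, distTable_pendant_left p hxy]⟩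
  · obtain ⟨w, hw⟩ := exists_walk_length_eq_distTable_core j₀ (.inl v) y
    exact ⟨.cons (adj_pendant_right q) w, by simp [hw, distTable_pendant_right q hxy]⟩

theorem dist_eq_distTable (j₀ : Fin t) (x y : (Fin s ⊕ Fin t) ⊕ (Fin a ⊕ Fin b)) :
    (KstPend s t a b u v).dist x y = distTable u v x y :=
  SimpleGraph.dist_eq_of_walk_length_eq distTable_self (fun x _ _ => distTable_le_succ_of_adj x)
    (exists_walk_length_eq_distTable j₀) x y

theorem harary_eq (j₀ : Fin t) : harary (KstPend s t a b u v) =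
    (s * (s - 1) + t * (t - 1) + a * (a - 1) + b * (b - 1)) / 4 + s * t
      + (a + b) * (s + 2) / 3 + (a + b) * t / 2 + a * b / (if u = v then 2 else 4) := by
  simp only [harary_eq_half_sum_sum, dist_eq_distTable j₀, Fintype.sum_sum_type, distTable,
    apply_ite (fun n : ℕ => 1 / (n : ℚ)), Nat.cast_zero, div_zero, Finset.sum_add_distrib,
    Fintype.sum_ite_eq_sub_add_card_nsmul, Fintype.sum_ite_eq_sub_add_card_nsmul',
    Finset.sum_const, Finset.card_univ, ← Finset.mul_sum, Fintype.card_sum, Fintype.card_fin,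
    nsmul_eq_mul, Nat.cast_add]
  split_ifs <;> ring

end KstPend

theorem harary_move_pendants_general (s t a b : ℕ) (ht : 2 ≤ t) (u v : Fin s) (huv : u ≠ v) :
    harary (KstPend s t a b v v) - harary (KstPend s t a b u v) = (a : ℚ) * b / 4 := by
  rw [KstPend.harary_eq ⟨0, by omega⟩, KstPend.harary_eq ⟨0, by omega⟩, if_pos rfl, if_neg huv]
  ring

/-- Moving all `a` pendant edges from `u` to `v` changes the Harary index by exactly `ab/4`. -/
theorem harary_move_pendants (s t a b : ℕ) (hs : 2 ≤ s) (ht : 2 ≤ t)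
    (ha : 1 ≤ a) (hb : 1 ≤ b) (u v : Fin s) (huv : u ≠ v) :
    harary (KstPend s t a b v v) - harary (KstPend s t a b u v) = (a : ℚ) * b / 4 :=
  harary_move_pendants_general s t a b ht u v huv
end

section
/- For positive integers n, k, x with 2 ≤ x ≤ n−k−x, let B_k(x, n−k−x) be the bipartite graph obtained from the complete bipartite graph K_{x, n−k−x} by attaching k pendent vertices to a single vertex of degree n−k−x (a vertex in the part of size x). Then the Wiener index of B_k(x, n−k−x) equals x² + (2k−n)x + n² − n − 2k. -/
open Finset
open scoped Classical

/-- `Bgraph x y k w`: the bipartite graph obtained from the complete bipartite graph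
`K_{x,y}` (parts `Fin x` and `Fin y`) by attaching `k` pendant vertices to the vertex `w`
of the part of size `x`. With `y = n - k - x` this is the graph `B_k(x, n-k-x)`. -/
def Bgraph (x y k : ℕ) (w : Fin x) : SimpleGraph ((Fin x ⊕ Fin y) ⊕ Fin k) :=
  SimpleGraph.fromRel (fun p q =>
    (∃ i j, p = Sum.inl (Sum.inl i) ∧ q = Sum.inl (Sum.inr j)) ∨
    (∃ m, p = Sum.inr m ∧ q = Sum.inl (Sum.inl w)))

/-!
All distances in `B_k(x, y)` are 1, 2 or 3. The complete bipartite part `K_{x,y}` has diameter 2,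
and a pendant vertex is adjacent only to `w`: it is at distance 2 from the other pendant vertices
and from the part of size `y`, and at distance 3 from the other `x - 1` vertices of the part of
`w`. Summing the rows of the distance matrix, of which there are only four kinds, gives the
Wiener index.
-/

namespace SimpleGraph

variable {V : Type*} {G : SimpleGraph V} {u v w : V}

lemma dist_eq_two_of_adj_of_adj (huv : u ≠ v) (hnadj : ¬G.Adj u v) (hu : G.Adj u w)
    (hv : G.Adj w v) : G.dist u v = 2 := by
  rw [dist, edist_eq_two_iff.mpr ⟨huv, hnadj, w, G.mem_commonNeighbors.mpr ⟨hu, hv.symm⟩⟩]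
  rfl

lemma dist_eq_three_of_walk (huv : u ≠ v) (hnadj : ¬G.Adj u v)
    (hcommon : ∀ w, G.Adj u w → ¬G.Adj w v) (p : G.Walk u v) (hp : p.length = 3) :
    G.dist u v = 3 := by
  have hlt : 2 < G.edist u v :=
    two_lt_edist_iff.mpr ⟨huv, hnadj, Set.eq_empty_iff_forall_notMem.mpr fun w hw =>
      hcommon w (G.mem_commonNeighbors.mp hw).1 (G.mem_commonNeighbors.mp hw).2.symm⟩
  have hle : G.edist u v ≤ 3 := by simpa [hp] using p.edist_le
  rw [dist, le_antisymm hle (Order.add_one_le_of_lt hlt)]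
  rfl

end SimpleGraph

lemma Fintype.sum_eq_add_card_sub_one_mul {α R : Type*} [Fintype α] [DecidableEq α] [Ring R]
    (f : α → R) (a : α) (c : R) (h : ∀ b ≠ a, f b = c) :
    ∑ b, f b = f a + ((Fintype.card α : R) - 1) * c := by
  rw [← Finset.add_sum_erase _ _ (Finset.mem_univ a),
    Finset.sum_congr rfl fun b hb => h b (Finset.ne_of_mem_erase hb), Finset.sum_const,
    Finset.card_erase_of_mem (Finset.mem_univ a), Finset.card_univ, nsmul_eq_mul,
    Nat.cast_pred (Fintype.card_pos_iff.mpr ⟨a⟩)]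

namespace Bgraph

open SimpleGraph

variable {x y k : ℕ} {w : Fin x}

local notation "A" i => (Sum.inl (Sum.inl i) : (Fin x ⊕ Fin y) ⊕ Fin k)
local notation "B" j => (Sum.inl (Sum.inr j) : (Fin x ⊕ Fin y) ⊕ Fin k)
local notation "P" m => (Sum.inr m : (Fin x ⊕ Fin y) ⊕ Fin k)

lemma dist_A_B (i : Fin x) (j : Fin y) : (Bgraph x y k w).dist (A i) (B j) = 1 := by
  simp [Bgraph]

lemma dist_P_w (m : Fin k) : (Bgraph x y k w).dist (P m) (A w) = 1 := by
  simp [Bgraph]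

lemma dist_A_A (hy : 0 < y) {i i' : Fin x} (h : i ≠ i') :
    (Bgraph x y k w).dist (A i) (A i') = 2 :=
  dist_eq_two_of_adj_of_adj (w := B ⟨0, hy⟩) (by simpa using h) (by simp [Bgraph])
    (by simp [Bgraph]) (by simp [Bgraph])

lemma dist_B_B {j j' : Fin y} (h : j ≠ j') : (Bgraph x y k w).dist (B j) (B j') = 2 :=
  dist_eq_two_of_adj_of_adj (w := A w) (by simpa using h) (by simp [Bgraph])
    (by simp [Bgraph]) (by simp [Bgraph])

lemma dist_P_P {m m' : Fin k} (h : m ≠ m') : (Bgraph x y k w).dist (P m) (P m') = 2 :=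
  dist_eq_two_of_adj_of_adj (w := A w) (by simpa using h) (by simp [Bgraph])
    (by simp [Bgraph]) (by simp [Bgraph])

lemma dist_P_B (m : Fin k) (j : Fin y) : (Bgraph x y k w).dist (P m) (B j) = 2 :=
  dist_eq_two_of_adj_of_adj (w := A w) (by simp) (by simp [Bgraph])
    (by simp [Bgraph]) (by simp [Bgraph])

lemma dist_P_A (hy : 0 < y) (m : Fin k) {i : Fin x} (h : i ≠ w) :
    (Bgraph x y k w).dist (P m) (A i) = 3 := by
  have hP : ∀ v, (Bgraph x y k w).Adj (P m) v → v = A w := by simp [Bgraph]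
  let j : Fin y := ⟨0, hy⟩
  refine dist_eq_three_of_walk (by simp) (by simp [Bgraph, h])
    (fun v hv => hP v hv ▸ by simp [Bgraph, Ne.symm h])
    (.cons (v := A w) (by simp [Bgraph]) (.cons (v := B j) (by simp [Bgraph])
      (.cons (by simp [Bgraph]) .nil))) rfl

lemma sum_dist_A_of_ne (hy : 0 < y) {i : Fin x} (h : i ≠ w) :
    ∑ v, ((Bgraph x y k w).dist (A i) v : ℚ) = 2 * (x - 1) + y + 3 * k := by
  rw [Fintype.sum_sum_type, Fintype.sum_sum_type,
    Fintype.sum_eq_add_card_sub_one_mul _ i 2 fun i' h' => by simp [dist_A_A hy h'.symm]]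
  simp only [dist_self, dist_A_B, dist_comm (v := P _), dist_P_A hy _ h,
    Finset.sum_const, Finset.card_univ, Fintype.card_fin, nsmul_eq_mul,
    Nat.cast_zero, Nat.cast_one, Nat.cast_ofNat]
  ring

lemma sum_dist_A_w (hy : 0 < y) :
    ∑ v, ((Bgraph x y k w).dist (A w) v : ℚ) = 2 * (x - 1) + y + k := by
  rw [Fintype.sum_sum_type, Fintype.sum_sum_type,
    Fintype.sum_eq_add_card_sub_one_mul _ w 2 fun i' h' => by simp [dist_A_A hy h'.symm]]
  simp only [dist_self, dist_A_B, dist_comm (v := P _), dist_P_w,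
    Finset.sum_const, Finset.card_univ, Fintype.card_fin, nsmul_eq_mul, Nat.cast_zero, Nat.cast_one]
  ring

lemma sum_dist_B (j : Fin y) :
    ∑ v, ((Bgraph x y k w).dist (B j) v : ℚ) = x + 2 * (y - 1) + 2 * k := by
  rw [Fintype.sum_sum_type, Fintype.sum_sum_type,
    Fintype.sum_eq_add_card_sub_one_mul _ j 2 fun j' h' => by simp [dist_B_B h'.symm]]
  simp only [dist_self, dist_comm (v := A _), dist_A_B, dist_comm (v := P _), dist_P_B,
    Finset.sum_const, Finset.card_univ, Fintype.card_fin, nsmul_eq_mul,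
    Nat.cast_zero, Nat.cast_one]
  ring

lemma sum_dist_P (hy : 0 < y) (m : Fin k) :
    ∑ v, ((Bgraph x y k w).dist (P m) v : ℚ) = 1 + 3 * (x - 1) + 2 * y + 2 * (k - 1) := by
  rw [Fintype.sum_sum_type, Fintype.sum_sum_type,
    Fintype.sum_eq_add_card_sub_one_mul _ w 3 fun i h => by simp [dist_P_A hy m h],
    Fintype.sum_eq_add_card_sub_one_mul _ m 2 fun m' h => by simp [dist_P_P h.symm]]
  simp only [dist_self, dist_P_w, dist_P_B, Finset.sum_const, Finset.card_univ,
    Fintype.card_fin, nsmul_eq_mul, Nat.cast_zero, Nat.cast_one, Nat.cast_ofNat]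
  ring

theorem wiener_eq (hy : 0 < y) :
    wiener (Bgraph x y k w) = x * (x - 1) + y * (y - 1) + k * (k - 1) + x * y + k
      + 3 * k * (x - 1) + 2 * k * y := by
  rw [wiener, Fintype.sum_sum_type, Fintype.sum_sum_type,
    Fintype.sum_eq_add_card_sub_one_mul _ w _ fun i h => sum_dist_A_of_ne hy h]
  simp only [sum_dist_A_w hy, sum_dist_B, sum_dist_P hy, Finset.sum_const, Finset.card_univ,
    Fintype.card_fin, nsmul_eq_mul]
  ring

end Bgraph

theorem wiener_Bgraph_general (n k x y : ℕ) (hn : n = x + y + k)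
    (hxy : x ≤ y) (w : Fin x) :
    wiener (Bgraph x y k w)
      = (x : ℚ)^2 + (2 * (k : ℚ) - n) * x + (n : ℚ)^2 - n - 2 * k := by
  rw [Bgraph.wiener_eq (w.pos.trans_le hxy), hn]
  push_cast
  ring

/-- Wiener index of `B_k(x, n-k-x)` (here `y = n - k - x`). -/
theorem wiener_Bgraph (n k x y : ℕ) (hn : n = x + y + k) (hk : 1 ≤ k)
    (hx : 2 ≤ x) (hxy : x ≤ y) (w : Fin x) :
    wiener (Bgraph x y k w)
      = (x : ℚ)^2 + (2 * (k : ℚ) - n) * x + (n : ℚ)^2 - n - 2 * k :=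
  wiener_Bgraph_general n k x y hn hxy w
end

section
/- For positive integers n, k, x with 2 ≤ x ≤ n−k−x, the connective eccentricity index of B_k(x, n−k−x) equals (−5x² + (5n−5k−1)x + 4k + n)/6. -/
open Finset
open scoped Classical

/-! In `B_k(x, y)` the hub `w` and the vertices of the `y`-part have eccentricity 2, while the
other vertices of the `x`-part and the pendant vertices have eccentricity 3: a pendant vertex and
a vertex `i ≠ w` of the `x`-part have no common neighbour, but are joined through `w` and any
vertex of the `y`-part. With degrees `y + k`, `x`, `y` and `1` this gives
`ξ^{ce} = (y + k)/2 + x y/2 + (x - 1) y/3 + k/3 = (5 x y + y + 5 k)/6`, which is the stated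
formula once `y = n - k - x`. -/

namespace SimpleGraph

variable {V : Type*} {G : SimpleGraph V} {u v z z' : V}

lemma dist_le_one_of_adj (h : G.Adj u v) : G.dist u v ≤ 1 :=
  (dist_eq_one_iff_adj.mpr h).le

lemma dist_le_two_of_adj_of_adj (huz : G.Adj u z) (hzv : G.Adj z v) : G.dist u v ≤ 2 :=
  dist_le (.cons huz (.cons hzv .nil))

lemma dist_le_three_of_adj_of_adj_of_adj (huz : G.Adj u z) (hzz' : G.Adj z z')
    (hz'v : G.Adj z' v) : G.dist u v ≤ 3 :=
  dist_le (.cons huz (.cons hzz' (.cons hz'v .nil)))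

lemma dist_eq_two_of_adj_of_adj_s14 (hne : u ≠ v) (hnadj : ¬ G.Adj u v) (huz : G.Adj u z)
    (hzv : G.Adj z v) : G.dist u v = 2 := by
  have hreach : G.Reachable u v := (Walk.cons huz (.cons hzv .nil)).reachable
  have : G.edist u v = 2 := edist_eq_two_iff.mpr ⟨hne, hnadj, z, huz, hzv.symm⟩
  exact_mod_cast hreach.coe_dist_eq_edist.trans this

lemma dist_eq_three_of_adj_of_adj_of_adj (hne : u ≠ v) (hnadj : ¬ G.Adj u v)
    (hnmid : ∀ c, G.Adj u c → ¬ G.Adj c v) (huz : G.Adj u z) (hzz' : G.Adj z z')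
    (hz'v : G.Adj z' v) : G.dist u v = 3 := by
  have hreach : G.Reachable u v := (Walk.cons huz (.cons hzz' (.cons hz'v .nil))).reachable
  have h2 : 2 < G.edist u v := two_lt_edist_iff.mpr ⟨hne, hnadj, by
    ext c; simpa [mem_commonNeighbors, G.adj_comm v c] using hnmid c⟩
  rw [← hreach.coe_dist_eq_edist] at h2
  have := dist_le_three_of_adj_of_adj_of_adj huz hzz' hz'v
  norm_cast at h2
  omega

end SimpleGraph

open SimpleGraph

lemma ecc_eq_of_forall_dist_le {V : Type*} [Fintype V] {G : SimpleGraph V} {u v : V} {e : ℕ}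
    (hle : ∀ v, G.dist u v ≤ e) (hv : G.dist u v = e) : ecc G u = e :=
  le_antisymm (Finset.sup_le fun v _ => hle v) (hv ▸ Finset.le_sup (Finset.mem_univ v))

namespace Bgraph

variable {x y k : ℕ} {w : Fin x}

lemma degree_inl_inl_of_ne {i : Fin x} (hi : i ≠ w) :
    (Bgraph x y k w).degree (.inl (.inl i)) = y := by
  rw [← card_neighborFinset_eq_degree, neighborFinset_eq_filter, Finset.card_filter,
    Fintype.sum_sum_type, Fintype.sum_sum_type]
  simp [Bgraph, hi]

lemma degree_inl_inl_self : (Bgraph x y k w).degree (.inl (.inl w)) = y + k := by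
  rw [← card_neighborFinset_eq_degree, neighborFinset_eq_filter, Finset.card_filter,
    Fintype.sum_sum_type, Fintype.sum_sum_type]
  simp [Bgraph]

lemma degree_inl_inr (j : Fin y) : (Bgraph x y k w).degree (.inl (.inr j)) = x := by
  rw [← card_neighborFinset_eq_degree, neighborFinset_eq_filter, Finset.card_filter,
    Fintype.sum_sum_type, Fintype.sum_sum_type]
  simp [Bgraph]

lemma degree_inr (m : Fin k) : (Bgraph x y k w).degree (.inr m) = 1 := by
  rw [← card_neighborFinset_eq_degree, neighborFinset_eq_filter, Finset.card_filter,
    Fintype.sum_sum_type, Fintype.sum_sum_type]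
  simp [Bgraph]

lemma adj_left_right (i : Fin x) (j : Fin y) :
    (Bgraph x y k w).Adj (.inl (.inl i)) (.inl (.inr j)) := by
  simp [Bgraph]

lemma adj_pendant (m : Fin k) : (Bgraph x y k w).Adj (.inr m) (.inl (.inl w)) := by
  simp [Bgraph]

lemma dist_inl_inl_inr {i : Fin x} (hi : i ≠ w) (hy : 0 < y) (m : Fin k) :
    (Bgraph x y k w).dist (.inl (.inl i)) (.inr m) = 3 := by
  have hnmid : ∀ c, (Bgraph x y k w).Adj (.inl (.inl i)) c →
      ¬ (Bgraph x y k w).Adj c (.inr m) := by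
    rintro ((c | c) | c) <;> simp [Bgraph, hi]
  let j : Fin y := ⟨0, hy⟩
  exact dist_eq_three_of_adj_of_adj_of_adj (by simp) (by simp [Bgraph, hi]) hnmid
    (adj_left_right i j) (adj_left_right w j).symm (adj_pendant m).symm

lemma ecc_inl_inl_self (hx : 2 ≤ x) (hy : 0 < y) :
    ecc (Bgraph x y k w) (.inl (.inl w)) = 2 := by
  have : Nontrivial (Fin x) := Fin.nontrivial_iff_two_le.mpr hx
  obtain ⟨i, hi⟩ := exists_ne w
  let j : Fin y := ⟨0, hy⟩
  refine ecc_eq_of_forall_dist_le ?_ (dist_eq_two_of_adj_of_adj_s14 (v := .inl (.inl i))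
    (by simp [hi.symm]) (by simp [Bgraph]) (adj_left_right w j) (adj_left_right i j).symm)
  rintro ((i' | j') | m)
  · exact dist_le_two_of_adj_of_adj (adj_left_right w j) (adj_left_right i' j).symm
  · exact (dist_le_one_of_adj (adj_left_right w j')).trans one_le_two
  · exact (dist_le_one_of_adj (adj_pendant m).symm).trans one_le_two

lemma ecc_inl_inl_of_ne {i : Fin x} (hi : i ≠ w) (hy : 0 < y) (hk : 0 < k) :
    ecc (Bgraph x y k w) (.inl (.inl i)) = 3 := by
  let j : Fin y := ⟨0, hy⟩
  refine ecc_eq_of_forall_dist_le ?_ (dist_inl_inl_inr hi hy ⟨0, hk⟩)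
  rintro ((i' | j') | m)
  · exact (dist_le_two_of_adj_of_adj (adj_left_right i j) (adj_left_right i' j).symm).trans
      (by norm_num)
  · exact (dist_le_one_of_adj (adj_left_right i j')).trans (by norm_num)
  · exact (dist_inl_inl_inr hi hy m).le

lemma ecc_inl_inr (j : Fin y) (hk : 0 < k) : ecc (Bgraph x y k w) (.inl (.inr j)) = 2 := by
  let m : Fin k := ⟨0, hk⟩
  refine ecc_eq_of_forall_dist_le ?_ (dist_eq_two_of_adj_of_adj_s14 (v := .inr m)
    (by simp) (by simp [Bgraph]) (adj_left_right w j).symm (adj_pendant m).symm)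
  rintro ((i' | j') | m')
  · exact (dist_le_one_of_adj (adj_left_right i' j).symm).trans one_le_two
  · exact dist_le_two_of_adj_of_adj (adj_left_right w j).symm (adj_left_right w j')
  · exact dist_le_two_of_adj_of_adj (adj_left_right w j).symm (adj_pendant m').symm

lemma ecc_inr (m : Fin k) (hx : 2 ≤ x) (hy : 0 < y) : ecc (Bgraph x y k w) (.inr m) = 3 := by
  have : Nontrivial (Fin x) := Fin.nontrivial_iff_two_le.mpr hx
  obtain ⟨i, hi⟩ := exists_ne w
  let j : Fin y := ⟨0, hy⟩
  refine ecc_eq_of_forall_dist_le ?_ (dist_comm.trans (dist_inl_inl_inr hi hy m))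
  rintro ((i' | j') | m')
  · exact dist_le_three_of_adj_of_adj_of_adj (adj_pendant m) (adj_left_right w j)
      (adj_left_right i' j).symm
  · exact (dist_le_two_of_adj_of_adj (adj_pendant m) (adj_left_right w j')).trans (by norm_num)
  · exact (dist_le_two_of_adj_of_adj (adj_pendant m) (adj_pendant m').symm).trans (by norm_num)

end Bgraph

/-- Connective eccentricity index of `B_k(x, n-k-x)` (here `y = n - k - x`). -/
theorem cei_Bgraph (n k x y : ℕ) (hn : n = x + y + k) (hk : 1 ≤ k)
    (hx : 2 ≤ x) (hxy : x ≤ y) (w : Fin x) :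
    cei (Bgraph x y k w)
      = (-5 * (x : ℚ)^2 + (5 * (n : ℚ) - 5 * k - 1) * x + 4 * k + n) / 6 := by
  have hy : 0 < y := by omega
  have hcenter : ∑ i : Fin x, ((Bgraph x y k w).degree (.inl (.inl i)) : ℚ) /
      ecc (Bgraph x y k w) (.inl (.inl i)) = (y + k) / 2 + (x - 1) * y / 3 := by
    rw [Fintype.sum_eq_add_sum_compl w, Bgraph.degree_inl_inl_self, Bgraph.ecc_inl_inl_self hx hy,
      Finset.sum_congr rfl fun i hi => by
        have hi : i ≠ w := by simpa using hi
        rw [Bgraph.degree_inl_inl_of_ne hi, Bgraph.ecc_inl_inl_of_ne hi hy hk]]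
    simp only [Finset.sum_const, Finset.card_compl, Fintype.card_fin, Finset.card_singleton,
      nsmul_eq_mul, Nat.cast_sub (by omega : 1 ≤ x), Nat.cast_one]
    push_cast
    ring
  simp only [cei, Fintype.sum_sum_type, hcenter, Bgraph.degree_inl_inr, Bgraph.ecc_inl_inr _ hk,
    Bgraph.degree_inr, Bgraph.ecc_inr _ hx hy, Finset.sum_const, Finset.card_univ,
    Fintype.card_fin, nsmul_eq_mul]
  subst hn
  push_cast
  ring
end
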